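/- Unstable dimension for small parameter a, nonresonant case (Proposition 3.3, equation (3.21)). Let A(a) be the normalized N-cycle matrix defined in the context and assume N ≢ 1−β (mod 4). Then there exists δ > 0 such that for all a ∈ (0, δ): no eigenvalue of A(a) has zero real part, and μ(A(a)) = 2·⌊(N−1+β)/4⌋ + 1 + (1−β)/2. -/

import Mathlib

open scoped BigOperators

/-- The normalized `N`-cycle matrix `A(a)`: diagonal entries `-a·α m`,
sub-diagonal entries `1`, corner entry `A 0 (N-1) = β`; all other entries `0`. -/
noncomputable def Acyc (N : ℕ) (α : Fin N → ℝ) (β : ℝ) (a : ℝ) :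
    Matrix (Fin N) (Fin N) ℝ :=
  Matrix.of fun i j =>
    if j = i then -(a * α i)
    else if ((j : ℕ) + 1) % N = (i : ℕ) then (if (i : ℕ) = 0 then β else 1) else 0

/-- The eigenvalues of a real matrix: roots in `ℂ` of its characteristic
polynomial, counted with algebraic multiplicity. -/
noncomputable def specC {N : ℕ} (A : Matrix (Fin N) (Fin N) ℝ) : Multiset ℂ :=
  (Matrix.charpoly (A.map (algebraMap ℝ ℂ))).roots

/-- `μ(A)`: the number of eigenvalues of `A` with strictly positive real part,
counted with algebraic multiplicity. -/
noncomputable def muM {N : ℕ} (A : Matrix (Fin N) (Fin N) ℝ) : ℕ :=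
  Multiset.card ((specC A).filter fun z => 0 < z.re)

/-- `N_aut`: the number of indices `m` with `α m < 0`. -/
noncomputable def NautOf {N : ℕ} (α : Fin N → ℝ) : ℕ :=
  (Finset.univ.filter fun m => α m < 0).card

/-!
The characteristic polynomial of `A(a)` is `∏ m, (X + a α_m) - β`, which at `a = 0` is `X ^ N - β`.
Its roots are `exp (iπ (2k + c) / N)`, `k < N`, where `β = (-1) ^ c`; none of them lies on the
imaginary axis exactly when `N ≢ 1 - β (mod 4)`, and those with positive real part are the ones
with `4k + 2c < N` or `4k + 2c > 3N`. The roots of monic polynomials of fixed degree depend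
continuously on the coefficients (compactness of the space of bounded root vectors), so for small
`a > 0` no root reaches the imaginary axis and the count is unchanged.
-/

open Polynomial Filter Topology Real

open Fin.NatCast in
theorem Equiv.Perm.eq_one_or_eq_finRotate {n : ℕ} (σ : Perm (Fin (n + 2)))
    (h : ∀ i, σ i = i ∨ σ i = i + 1) : σ = 1 ∨ σ = finRotate (n + 2) := by
  by_cases hfix : ∃ i₀, σ i₀ = i₀
  · left
    obtain ⟨i₀, hi₀⟩ := hfix
    have hpred : ∀ i, σ (i + 1) = i + 1 → σ i = i := fun i hi =>
      (h i).resolve_right fun h' =>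
        add_ne_left.mpr one_ne_zero (σ.injective (h'.trans hi.symm)).symm
    have hfixed : ∀ k : ℕ, σ (i₀ - (k : Fin (n + 2))) = i₀ - k := by
      intro k
      induction k with
      | zero => simpa using hi₀
      | succ k ih => exact hpred _ (by simpa [sub_add_eq_sub_sub, sub_add_cancel] using ih)
    ext1 j
    simpa using hfixed (i₀ - j).val
  · right
    push Not at hfix
    ext1 i
    rw [finRotate_apply]
    exact (h i).resolve_left (hfix i)

theorem Matrix.det_of_cyclic_bidiagonal {R : Type*} [CommRing R] {n : ℕ}
    (d e : Fin (n + 2) → R) :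
    (Matrix.of fun i j : Fin (n + 2) => if j = i then d i else if i = j + 1 then e j else 0).det =
      ∏ i, d i - (-1) ^ n * ∏ i, e i := by
  have hne : (1 : Equiv.Perm (Fin (n + 2))) ≠ finRotate (n + 2) := by
    intro h
    simpa [finRotate_apply] using congr($h 0)
  rw [Matrix.det_apply, Fintype.sum_eq_add 1 _ hne]
  · simp [sign_finRotate, pow_succ, Units.smul_def, sub_eq_add_neg]
  · rintro σ ⟨h1, hrot⟩
    obtain ⟨i, hi⟩ : ∃ i, σ i ≠ i ∧ σ i ≠ i + 1 := by
      by_contra! h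
      exact (σ.eq_one_or_eq_finRotate fun i => or_iff_not_imp_left.2 (h i)).elim h1 hrot
    rw [Finset.prod_eq_zero (Finset.mem_univ i) (by simp [hi.1.symm, hi.2]), smul_zero]

theorem Acyc_add_two (n : ℕ) (α : Fin (n + 2) → ℝ) (β a : ℝ) :
    Acyc (n + 2) α β a = Matrix.of fun i j =>
      if j = i then -(a * α i) else if i = j + 1 then (if i = 0 then β else 1) else 0 := by
  ext i j
  simp only [Acyc, Matrix.of_apply, Fin.ext_iff, Fin.val_add, Fin.val_one, Fin.val_zero, eq_comm]

theorem charpoly_Acyc (n : ℕ) (α : Fin (n + 2) → ℝ) (β a : ℝ) :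
    ((Acyc (n + 2) α β a).map (algebraMap ℝ ℂ)).charpoly =
      ∏ m, (X + C ((a : ℂ) * α m)) - C (β : ℂ) := by
  have hcharmatrix : ((Acyc (n + 2) α β a).map (algebraMap ℝ ℂ)).charmatrix =
      Matrix.of fun i j => if j = i then X + C ((a : ℂ) * α i)
        else if i = j + 1 then -C (if j + 1 = 0 then (β : ℂ) else 1) else 0 := by
    ext i j : 1
    rw [Acyc_add_two, Matrix.charmatrix_apply]
    by_cases hji : j = i
    · simp [hji]
    · simp only [Matrix.of_apply, Matrix.map_apply, Matrix.diagonal_apply_ne _ (Ne.symm hji),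
        if_neg hji]
      split_ifs <;> simp_all
  have hcorner : ∏ j : Fin (n + 2), (if j + 1 = 0 then (β : ℂ) else 1) = β := by
    rw [Fintype.prod_eq_single (-1) fun j hj => if_neg (by rwa [add_eq_zero_iff_eq_neg]),
      neg_add_cancel, if_pos rfl]
  rw [Matrix.charpoly, hcharmatrix, Matrix.det_of_cyclic_bidiagonal, Finset.prod_neg, ← map_prod,
    hcorner]
  simp [← mul_assoc, ← pow_add, show n + (n + 2) = 2 * (n + 1) by ring, pow_mul]

theorem Multiset.exists_eq_map_univ_fin {α : Type*} {s : Multiset α} {n : ℕ}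
    (h : Multiset.card s = n) : ∃ v : Fin n → α, s = Finset.univ.val.map v := by
  subst h
  refine ⟨fun k => s.toList.get (k.cast (by simp)), ?_⟩
  conv_lhs => rw [← Multiset.coe_toList s]
  rw [Fin.univ_val_map]
  congr 1
  apply List.ext_get <;> simp

theorem Polynomial.roots_prod_X_sub_C_fintype {R ι : Type*} [CommRing R] [IsDomain R]
    [Fintype ι] (v : ι → R) : (∏ k, (X - C (v k))).roots = Finset.univ.val.map v := by
  simpa [Multiset.map_map] using roots_multiset_prod_X_sub_C (Finset.univ.val.map v)

theorem Polynomial.Monic.exists_eq_prod_X_sub_C {p : ℂ[X]} (hp : p.Monic) {n : ℕ}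
    (hn : p.natDegree = n) : ∃ v : Fin n → ℂ, p = ∏ k, (X - C (v k)) := by
  obtain ⟨v, hv⟩ :=
    Multiset.exists_eq_map_univ_fin (IsAlgClosed.card_roots_eq_natDegree.trans hn)
  refine ⟨v, ?_⟩
  rw [← prod_multiset_X_sub_C_of_monic_of_roots_card_eq hp IsAlgClosed.card_roots_eq_natDegree,
    hv, Multiset.map_map]
  rfl

theorem eventually_notMem_frontier_and_mem_iff {X : Type*} [TopologicalSpace X] {s : Set X}
    {a : X} (ha : a ∉ frontier s) : ∀ᶠ y in 𝓝 a, y ∉ frontier s ∧ (y ∈ s ↔ a ∈ s) := by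
  by_cases has : a ∈ s
  · filter_upwards [isOpen_interior.mem_nhds ((mem_interior_iff_notMem_frontier has).mpr ha)]
      with y hy
    exact ⟨Set.disjoint_left.mp disjoint_interior_frontier hy,
      iff_of_true (interior_subset hy) has⟩
  · rw [← frontier_compl] at ha ⊢
    filter_upwards [isOpen_interior.mem_nhds ((mem_interior_iff_notMem_frontier has).mpr ha)]
      with y hy
    exact ⟨Set.disjoint_left.mp disjoint_interior_frontier hy,
      iff_of_false (interior_subset hy) has⟩

theorem Polynomial.eventually_card_roots_filter_eq {ι : Type*} {l : Filter ι} {n : ℕ}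
    {p : ι → ℂ[X]} {p₀ : ℂ[X]} (hmonic : ∀ i, (p i).Monic) (hdeg : ∀ i, (p i).natDegree = n)
    {R : ℝ} (hbdd : ∀ᶠ i in l, ∀ z ∈ (p i).roots, ‖z‖ ≤ R)
    (hlim : ∀ z, Tendsto (fun i => (p i).eval z) l (𝓝 (p₀.eval z)))
    {s : Set ℂ} [DecidablePred (· ∈ s)] (hs : ∀ z ∈ p₀.roots, z ∉ frontier s) :
    ∀ᶠ i in l, (∀ z ∈ (p i).roots, z ∉ frontier s) ∧
      Multiset.card ((p i).roots.filter (· ∈ s)) = Multiset.card (p₀.roots.filter (· ∈ s)) := by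
  choose v hv using fun i => (hmonic i).exists_eq_prod_X_sub_C (hdeg i)
  have hroots : ∀ i, (p i).roots = Finset.univ.val.map (v i) := fun i => by
    rw [hv, roots_prod_X_sub_C_fintype]
  -- Along the failing indices the bounded root vectors `v i` cluster at some `x`, which enumerates
  -- the roots of `p₀`; near `x` each coordinate stays on the same side of `frontier s`.
  by_contra hbad
  set l' := l ⊓ 𝓟 {i | ¬ ((∀ z ∈ (p i).roots, z ∉ frontier s) ∧
      Multiset.card ((p i).roots.filter (· ∈ s)) = Multiset.card (p₀.roots.filter (· ∈ s)))}
  have hfreq : ∃ᶠ i in l', v i ∈ Metric.closedBall 0 (max R 0) := by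
    refine frequently_inf_principal.mpr ((not_eventually.mp hbad).and_eventually hbdd |>.mono ?_)
    rintro i ⟨hi, hR⟩
    refine ⟨hi, mem_closedBall_zero_iff.mpr ((pi_norm_le_iff_of_nonneg (le_max_right R 0)).mpr
      fun k => (hR _ ?_).trans (le_max_left R 0))⟩
    simp [hroots]
  obtain ⟨x, -, hx⟩ :=
    (isCompact_closedBall (0 : Fin n → ℂ) (max R 0)).exists_mapClusterPt_of_frequently hfreq
  have hp₀ : p₀ = ∏ k, (X - C (x k)) := by
    refine Polynomial.funext fun z => ?_
    have hcont : Continuous fun y : Fin n → ℂ => ∏ k, (z - y k) := by fun_prop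
    have hcl := (hx.continuousAt_comp hcont.continuousAt).clusterPt.mono
      (((hlim z).mono_left inf_le_left).congr fun i => by simp [hv, eval_prod])
    simpa [eval_prod] using (eq_of_nhds_neBot hcl.neBot).symm
  have hxs : ∀ k, x k ∉ frontier s := fun k => hs _ (by simp [hp₀, roots_prod_X_sub_C_fintype])
  obtain ⟨i, hi, hvi⟩ := ((hx.frequently (eventually_all.mpr fun k =>
    (continuous_apply k).continuousAt.eventually
      (eventually_notMem_frontier_and_mem_iff (hxs k)))).and_eventually
    (mem_inf_of_right (mem_principal_self _))).exists
  refine hvi ⟨fun z hz => ?_, ?_⟩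
  · obtain ⟨k, -, rfl⟩ := Multiset.mem_map.mp (hroots i ▸ hz)
    exact (hi k).1
  · rw [hroots, hp₀, roots_prod_X_sub_C_fintype, Multiset.filter_map, Multiset.filter_map,
      Multiset.card_map, Multiset.card_map]
    exact congrArg _ (Multiset.filter_congr fun k _ => (hi k).2)

theorem Polynomial.monic_prod_X_add_C_sub_C {R ι : Type*} [CommRing R] [Nontrivial R]
    [Fintype ι] [Nonempty ι] (c : ι → R) (β : R) : (∏ i, (X + C (c i)) - C β).Monic := by
  have hprod : (∏ i, (X + C (c i))).Monic :=
    monic_prod_of_monic _ _ fun i _ => monic_X_add_C (c i)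
  refine hprod.sub_of_left (degree_C_le.trans_lt (natDegree_pos_iff_degree_pos.mp ?_))
  rw [natDegree_prod_of_monic _ _ fun i _ => monic_X_add_C (c i)]
  simp [Fintype.card_pos]

theorem Polynomial.natDegree_prod_X_add_C_sub_C {R ι : Type*} [CommRing R] [Nontrivial R]
    [Fintype ι] (c : ι → R) (β : R) :
    (∏ i, (X + C (c i)) - C β).natDegree = Fintype.card ι := by
  rw [natDegree_sub_C, natDegree_prod_of_monic _ _ fun i _ => monic_X_add_C (c i)]
  simp

theorem norm_le_of_prod_add_eq {𝕜 ι : Type*} [NormedField 𝕜] [Fintype ι] [Nonempty ι]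
    {c : ι → 𝕜} {r : ℝ} (hc : ∀ i, ‖c i‖ ≤ r) {β z : 𝕜} (hz : ∏ i, (z + c i) = β) :
    ‖z‖ ≤ r + max 1 ‖β‖ := by
  by_contra! h
  have hfactor : ∀ i ∈ Finset.univ, max 1 ‖β‖ < ‖z + c i‖ := fun i _ => by
    have := norm_sub_norm_le z (-c i)
    rw [norm_neg, sub_neg_eq_add] at this
    linarith [hc i]
  have hprod := Finset.prod_lt_prod_of_nonempty (fun _ _ => by positivity) hfactor
    Finset.univ_nonempty
  rw [← norm_prod, hz, Finset.prod_const] at hprod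
  have := le_self_pow₀ (le_max_left 1 ‖β‖) (Finset.univ_nonempty (α := ι)).card_pos.ne'
  linarith [le_max_right 1 ‖β‖]

theorem eventually_card_roots_prod_X_add_C_mul_sub_C {ι : Type*} [Fintype ι] [Nonempty ι]
    (c : ι → ℂ) (β : ℂ) {s : Set ℂ} [DecidablePred (· ∈ s)]
    (hs : ∀ z ∈ nthRoots (Fintype.card ι) β, z ∉ frontier s) :
    ∀ᶠ a in 𝓝 (0 : ℂ), (∀ z ∈ (∏ i, (X + C (a * c i)) - C β).roots, z ∉ frontier s) ∧
      Multiset.card ((∏ i, (X + C (a * c i)) - C β).roots.filter (· ∈ s)) =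
        Multiset.card ((nthRoots (Fintype.card ι) β).filter (· ∈ s)) := by
  have hsmall : ∀ᶠ a in 𝓝 (0 : ℂ), ∀ i, ‖a * c i‖ ≤ 1 := eventually_all.mpr fun i => by
    have : Tendsto (fun a : ℂ => ‖a * c i‖) (𝓝 0) (𝓝 0) := by
      simpa using (show Continuous fun a : ℂ => ‖a * c i‖ by fun_prop).tendsto 0
    exact this.eventually (eventually_le_nhds one_pos)
  refine eventually_card_roots_filter_eq (fun a => monic_prod_X_add_C_sub_C _ β)
    (fun a => natDegree_prod_X_add_C_sub_C _ β) (R := 1 + max 1 ‖β‖) ?_ (fun z => ?_) hs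
  · filter_upwards [hsmall] with a ha z hz
    refine norm_le_of_prod_add_eq ha (β := β) ?_
    simpa [eval_prod, sub_eq_zero] using (mem_roots (monic_prod_X_add_C_sub_C _ β).ne_zero).mp hz
  · simpa [eval_prod] using
      (show Continuous fun a : ℂ => ∏ i, (z + a * c i) - β by fun_prop).tendsto 0

theorem nthRoots_neg_one_pow (N c : ℕ) (hN : N ≠ 0) :
    nthRoots N ((-1 : ℂ) ^ c) = (Multiset.range N).map fun k : ℕ =>
      Complex.exp ((π * ((2 * k + c) / N) : ℝ) * Complex.I) := by
  have hN' : (N : ℂ) ≠ 0 := Nat.cast_ne_zero.mpr hN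
  have hpow : Complex.exp (π * c / N * Complex.I) ^ N = (-1) ^ c := by
    rw [← Complex.exp_nat_mul, ← Complex.exp_pi_mul_I, ← Complex.exp_nat_mul]
    congr 1
    field_simp
  rw [(Complex.isPrimitiveRoot_exp N hN).nthRoots_eq hpow]
  refine Multiset.map_congr rfl fun k _ => ?_
  rw [← Complex.exp_nat_mul, ← Complex.exp_add]
  congr 1
  push_cast
  field_simp

theorem Real.cos_pi_mul_pos_iff {t : ℝ} (h0 : 0 ≤ t) (h2 : t < 2) :
    0 < cos (π * t) ↔ t < 1 / 2 ∨ 3 / 2 < t := by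
  constructor
  · intro hpos
    by_contra! h
    exact hpos.not_ge (cos_nonpos_of_pi_div_two_le_of_le (by nlinarith [pi_pos])
      (by nlinarith [pi_pos]))
  · rintro (h | h)
    · exact cos_pos_of_mem_Ioo ⟨by nlinarith [pi_pos], by nlinarith [pi_pos]⟩
    · rw [← cos_sub_two_pi]
      exact cos_pos_of_mem_Ioo ⟨by nlinarith [pi_pos], by nlinarith [pi_pos]⟩

theorem Real.cos_pi_mul_neg_iff {t : ℝ} (h0 : 0 ≤ t) (h2 : t < 2) :
    cos (π * t) < 0 ↔ 1 / 2 < t ∧ t < 3 / 2 := by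
  constructor
  · intro hneg
    by_contra! h
    rcases le_or_gt t (1 / 2) with h' | h'
    · exact hneg.not_ge (cos_nonneg_of_mem_Icc ⟨by nlinarith [pi_pos], by nlinarith [pi_pos]⟩)
    · rw [← cos_sub_two_pi] at hneg
      exact hneg.not_ge
        (cos_nonneg_of_mem_Icc ⟨by nlinarith [pi_pos, h h'], by nlinarith [pi_pos]⟩)
  · rintro ⟨h1, h3⟩
    exact cos_neg_of_pi_div_two_lt_of_lt (by nlinarith [pi_pos]) (by nlinarith [pi_pos])

theorem sign_cos_pi_mul_div {N c k : ℕ} (hc : c ≤ 1) (hk : k < N) :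
    (0 < cos (π * ((2 * k + c) / N)) ↔ 4 * k + 2 * c < N ∨ 3 * N < 4 * k + 2 * c) ∧
      (cos (π * ((2 * k + c) / N)) < 0 ↔ N < 4 * k + 2 * c ∧ 4 * k + 2 * c < 3 * N) := by
  have hN : (0 : ℝ) < N := by exact_mod_cast (k.zero_le.trans_lt hk)
  have h0 : (0 : ℝ) ≤ (2 * k + c) / N := by positivity
  have h2 : (2 * k + c : ℝ) / N < 2 := by
    rw [div_lt_iff₀ hN]
    exact_mod_cast (by omega : 2 * k + c < 2 * N)
  rw [cos_pi_mul_pos_iff h0 h2, cos_pi_mul_neg_iff h0 h2]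
  simp only [div_lt_div_iff₀ hN two_pos, div_lt_div_iff₀ two_pos hN]
  norm_cast
  omega

theorem card_filter_lt_or_gt (N : ℕ) {c : ℕ} (hc : c ≤ 1) :
    ((Finset.range N).filter fun k => 4 * k + 2 * c < N ∨ 3 * N < 4 * k + 2 * c).card =
      (N + 3 - 2 * c) / 4 + (N - ((3 * N - 2 * c) / 4 + 1)) := by
  rw [Finset.filter_or, Finset.card_union_of_disjoint]
  · congr 1
    · rw [show (Finset.range N).filter (fun k => 4 * k + 2 * c < N) =
          Finset.range ((N + 3 - 2 * c) / 4) by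
        ext k; simp only [Finset.mem_filter, Finset.mem_range]; omega, Finset.card_range]
    · rw [show (Finset.range N).filter (fun k => 3 * N < 4 * k + 2 * c) =
          Finset.Ico ((3 * N - 2 * c) / 4 + 1) N by
        ext k; simp only [Finset.mem_filter, Finset.mem_range, Finset.mem_Ico]; omega,
        Nat.card_Ico]
  · exact Finset.disjoint_filter.mpr fun k _ h => by omega

theorem re_nthRoots_neg_one_pow {N c : ℕ} (hN : N ≠ 0) (hc : c ≤ 1) (hmod : N % 4 ≠ 2 * c) :
    (∀ z ∈ nthRoots N ((-1 : ℂ) ^ c), z.re ≠ 0) ∧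
      Multiset.card ((nthRoots N ((-1 : ℂ) ^ c)).filter (0 < ·.re)) =
        (N + 3 - 2 * c) / 4 + (N - ((3 * N - 2 * c) / 4 + 1)) := by
  rw [nthRoots_neg_one_pow N c hN]
  constructor
  · simp only [Multiset.mem_map, Multiset.mem_range]
    rintro _ ⟨k, hk, rfl⟩ h0
    have := sign_cos_pi_mul_div hc hk
    simp only [Complex.exp_ofReal_mul_I_re] at h0
    simp only [h0, lt_irrefl, false_iff] at this
    omega
  · rw [Multiset.filter_map, Multiset.card_map, ← card_filter_lt_or_gt N hc, Finset.card_def,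
      Finset.filter_val, Finset.range_val]
    congr 1
    refine Multiset.filter_congr fun k hk => ?_
    simpa only [Function.comp_apply, Complex.exp_ofReal_mul_I_re] using
      (sign_cos_pi_mul_div hc (Multiset.mem_range.mp hk)).1

theorem re_nthRoots_of_eq_one_or_eq_neg_one {N : ℕ} (hN : N ≠ 0) {b : ℤ} (hb : b = 1 ∨ b = -1)
    (hmod : ¬ (N : ℤ) % 4 = (1 - b) % 4) :
    (∀ z ∈ nthRoots N (b : ℂ), z.re ≠ 0) ∧
      (Multiset.card ((nthRoots N (b : ℂ)).filter (0 < ·.re)) : ℤ) =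
        2 * ((N - 1 + b) / 4) + 1 + (1 - b) / 2 := by
  have hNq : ∃ q r, r < 4 ∧ N = 4 * q + r :=
    ⟨N / 4, N % 4, N.mod_lt four_pos, (N.div_add_mod 4).symm⟩
  rcases hb with rfl | rfl
  · obtain ⟨hre, hcard⟩ := re_nthRoots_neg_one_pow (c := 0) hN zero_le_one (by omega)
    rw [pow_zero] at hre hcard
    refine ⟨by exact_mod_cast hre, ?_⟩
    rw [Int.cast_one, hcard]
    obtain ⟨q, r, hr, rfl⟩ := hNq
    interval_cases r <;> omega
  · obtain ⟨hre, hcard⟩ := re_nthRoots_neg_one_pow (c := 1) hN le_rfl (by omega)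
    rw [pow_one] at hre hcard
    refine ⟨by exact_mod_cast hre, ?_⟩
    rw [Int.cast_neg, Int.cast_one, hcard]
    obtain ⟨q, r, hr, rfl⟩ := hNq
    interval_cases r <;> omega

theorem unstable_dimension_at_zero_nonresonant_general (N : ℕ) (hN : 3 ≤ N)
    (α : Fin N → ℝ) (b : ℤ) (hb : b = 1 ∨ b = -1)
    (hmod : ¬ ((N : ℤ) % 4 = (1 - b) % 4)) :
    ∃ δ : ℝ, 0 < δ ∧ ∀ a ∈ Set.Ioo (0 : ℝ) δ,
      (∀ z ∈ specC (Acyc N α (b : ℝ) a), z.re ≠ 0) ∧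
      (muM (Acyc N α (b : ℝ) a) : ℤ) =
        2 * (((N : ℤ) - 1 + b) / 4) + 1 + (1 - b) / 2 := by
  obtain ⟨n, rfl⟩ : ∃ n, N = n + 2 := ⟨N - 2, by omega⟩
  obtain ⟨hre, hcount⟩ := re_nthRoots_of_eq_one_or_eq_neg_one (by omega) hb hmod
  have hnear := eventually_card_roots_prod_X_add_C_mul_sub_C (fun m => (α m : ℂ)) ((b : ℝ) : ℂ)
    (s := {z | 0 < z.re}) (by simpa using hre)
  obtain ⟨δ, hδ, h⟩ := (nhdsGT_basis (0 : ℝ)).eventually_iff.mp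
    (((Complex.continuous_ofReal.tendsto' 0 0 Complex.ofReal_zero).eventually hnear).filter_mono
      nhdsWithin_le_nhds)
  refine ⟨δ, hδ, fun a ha => ?_⟩
  obtain ⟨hfrontier, hcard⟩ := h ha
  rw [muM, specC, charpoly_Acyc, ← hcount]
  exact ⟨fun z hz => by simpa using hfrontier z hz, by simpa using hcard⟩

/-- **Unstable dimension for small parameter `a`, nonresonant case (Proposition
3.3, equation (3.21)).** If `N ≢ 1 − β (mod 4)` then for all small `a > 0`, no
eigenvalue of `A(a)` has zero real part and
`μ(A(a)) = 2⌊(N−1+β)/4⌋ + 1 + (1−β)/2`. -/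
theorem unstable_dimension_at_zero_nonresonant (N : ℕ) (hN : 3 ≤ N)
    (α : Fin N → ℝ) (hα : ∀ m, α m ≠ 0) (hprod : ∏ m : Fin N, |α m| = 1)
    (b : ℤ) (hb : b = 1 ∨ b = -1)
    (hmod : ¬ ((N : ℤ) % 4 = (1 - b) % 4)) :
    ∃ δ : ℝ, 0 < δ ∧ ∀ a ∈ Set.Ioo (0 : ℝ) δ,
      (∀ z ∈ specC (Acyc N α (b : ℝ) a), z.re ≠ 0) ∧
      (muM (Acyc N α (b : ℝ) a) : ℤ) =
        2 * (((N : ℤ) - 1 + b) / 4) + 1 + (1 - b) / 2 :=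
  unstable_dimension_at_zero_nonresonant_general N hN α b hb hmod
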